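/- arXiv:1312.0068 — 2 statements merged into one kernel-verified Lean document; each statement's English description precedes it below -/
import Mathlib

section
/- Let t ∈ ℝ with 0 < t < 1 and let F = 2√(t/(1−t²)). Define f : ℂ ∖ [−F,F] → ℝ by f(z) = t·Re(z²) − |z|² + Re(U_F(z)²) − 2·log|U_F(z)| + log t + 1. Then f(z) = 0 for every z on the ellipse ∂E_t, and f(z) < 0 for every z ∈ ℂ ∖ (∂E_t ∪ [−F,F]). -/
open scoped Classical

/-- The real segment `[−F, F]` viewed as a subset of `ℂ`. -/
def segC (F : ℝ) : Set ℂ := {z : ℂ | z.im = 0 ∧ -F ≤ z.re ∧ z.re ≤ F}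

/-- `ℂ⁺`: the open right half-plane together with the nonnegative imaginary axis. -/
def Cplus : Set ℂ := {z : ℂ | 0 < z.re ∨ (z.re = 0 ∧ 0 ≤ z.im)}

/-- `U_F(z) = (z ∓ √(z²−F²))/F`, with `−` on `ℂ⁺` and `+` off `ℂ⁺`
(principal branch of the square root). -/
noncomputable def funU (F : ℝ) (z : ℂ) : ℂ :=
  if z ∈ Cplus then (z - (z ^ 2 - (F : ℂ) ^ 2) ^ ((1 : ℂ) / 2)) / F
  else (z + (z ^ 2 - (F : ℂ) ^ 2) ^ ((1 : ℂ) / 2)) / F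

/-- `T_F(z) = ±√(z²−F²)`, with `+` on `ℂ⁺` and `−` off `ℂ⁺`. -/
noncomputable def funT (F : ℝ) (z : ℂ) : ℂ :=
  if z ∈ Cplus then (z ^ 2 - (F : ℂ) ^ 2) ^ ((1 : ℂ) / 2)
  else -((z ^ 2 - (F : ℂ) ^ 2) ^ ((1 : ℂ) / 2))

/-- `W_F(z) = ((z+F)/(z−F))^{1/4} + ((z−F)/(z+F))^{1/4}` (principal fourth roots). -/
noncomputable def funW (F : ℝ) (z : ℂ) : ℂ :=
  ((z + F) / (z - F)) ^ ((1 : ℂ) / 4) + ((z - F) / (z + F)) ^ ((1 : ℂ) / 4)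

/-- The distance `F = 2√(t/(1−t²))` of the foci of the ellipse from the origin. -/
noncomputable def focF (t : ℝ) : ℝ := 2 * Real.sqrt (t / (1 - t ^ 2))

/-- The major semi-axis `a_t = √((1+t)/(1−t))`. -/
noncomputable def semiA (t : ℝ) : ℝ := Real.sqrt ((1 + t) / (1 - t))

/-- The minor semi-axis `b_t = √((1−t)/(1+t))`. -/
noncomputable def semiB (t : ℝ) : ℝ := Real.sqrt ((1 - t) / (1 + t))

/-- The ellipse `∂E_t = {x+iy : x²/a_t² + y²/b_t² = 1}`. -/
def ellipseBd (t : ℝ) : Set ℂ :=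
  {z : ℂ | z.re ^ 2 / semiA t ^ 2 + z.im ^ 2 / semiB t ^ 2 = 1}

/-- The open interior `E_t = {x+iy : x²/a_t² + y²/b_t² < 1}` of the ellipse. -/
def ellipseInt (t : ℝ) : Set ℂ :=
  {z : ℂ | z.re ^ 2 / semiA t ^ 2 + z.im ^ 2 / semiB t ^ 2 < 1}

/-- The exponent function
`f(z) = t·Re(z²) − |z|² + Re(U_F(z)²) − 2·log|U_F(z)| + log t + 1` with
`F = 2√(t/(1−t²))`. -/
noncomputable def funf (t : ℝ) (z : ℂ) : ℝ :=
  t * (z ^ 2).re - ‖z‖ ^ 2 + ((funU (focF t) z) ^ 2).re -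
    2 * Real.log ‖funU (focF t) z‖ + Real.log t + 1

/-!
`U_F` inverts the Joukowski map `u ↦ F/2 (u + u⁻¹)`, on the branch with `|U_F(z)| < 1` off
the segment, and this map sends the circle `|u|² = t` onto `∂E_t`; so `z ∈ ∂E_t` iff
`|U_F(z)|² = t`. With `u = U_F(z)` and `r = |u|²`, the exponent is
`f(z) = g(r) - 2 (Im u)² (r - t)² / ((1 - t²) r²)`, where `g = radialProfile t` is `f` on the
major axis. Since `g'(r) = (r - 1)(r - t) / ((1 + t) r²)`, on `(0, 1)` the function `g` has its
strict maximum `g(t) = 0` at `r = t`.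
-/

open Complex ComplexConjugate

lemma cpow_one_div_two_mem_Cplus (w : ℂ) : w ^ (1 / 2 : ℂ) ∈ Cplus := by
  rw [one_div]
  rcases lt_or_ge w.im 0 with him | him
  · left
    rw [cpow_inv_two_re, Real.sqrt_pos]
    linarith [abs_re_lt_norm.2 him.ne, neg_abs_le w.re]
  · have hre : 0 ≤ (w ^ (2⁻¹ : ℂ)).re := by rw [cpow_inv_two_re]; positivity
    have him' : 0 ≤ (w ^ (2⁻¹ : ℂ)).im := by rw [cpow_inv_two_im_eq_sqrt him]; positivity
    exact hre.lt_or_eq.imp id fun h => ⟨h.symm, him'⟩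

lemma re_mul_conj_pos_of_sq_eq {F : ℝ} {z s : ℂ} (hF : 0 ≤ F) (hz : z ∈ Cplus)
    (hs : s ∈ Cplus) (hsq : s ^ 2 = z ^ 2 - F ^ 2) (hseg : z ∉ segC F) :
    0 < (z * conj s).re := by
  have him : s.re * s.im = z.re * z.im := by
    have := congrArg im hsq
    simp only [sq, mul_im, sub_im, ← ofReal_mul, ofReal_im] at this
    linarith
  have hre : s.re ^ 2 - s.im ^ 2 = z.re ^ 2 - z.im ^ 2 - F ^ 2 := by
    have := congrArg re hsq
    simp only [sq, mul_re, sub_re, ← ofReal_mul, ofReal_re] at this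
    linarith
  simp only [mul_re, conj_re, conj_im, mul_neg, sub_neg_eq_add]
  simp only [Cplus, segC, Set.mem_ofPred_eq, not_and, not_le] at hz hs hseg
  -- `s.re * S = z.re * (s.re² + z.im²)` and `s.im * S = z.im * (z.re² + s.im²)` for
  -- `S = z.re * s.re + z.im * s.im` (use `s.re * s.im = z.re * z.im`) fix the sign of `S`.
  rcases hz with hx | ⟨hx, hy⟩
  · rcases hs with ha | ⟨ha, hb⟩
    · have key : s.re * (z.re * s.re + z.im * s.im) = z.re * (s.re ^ 2 + z.im ^ 2) := by
        linear_combination z.im * him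
      exact pos_of_mul_pos_right (key ▸ by positivity) ha.le
    · have hy : z.im = 0 := by rw [ha, zero_mul] at him; nlinarith
      nlinarith [hseg hy (by linarith)]
  · have hy : 0 < z.im := hy.lt_of_ne fun h => by linarith [hseg h.symm (by linarith)]
    have hb : 0 < s.im := by
      rcases hs with ha | ⟨ha, hb⟩
      · have : s.im = 0 := by simpa [hx, ha.ne'] using him
        nlinarith
      · exact hb.lt_of_ne fun h => by rw [hx, ← h] at hre; nlinarith
    rw [hx, zero_mul, zero_add]
    positivity

lemma funT_sq (F : ℝ) (z : ℂ) : funT F z ^ 2 = z ^ 2 - F ^ 2 := by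
  unfold funT
  split_ifs <;> simp [one_div, cpow_ofNat_inv_pow]

lemma re_mul_conj_funT_pos {F : ℝ} {z : ℂ} (hF : 0 ≤ F) (hz : z ∉ segC F) :
    0 < (z * conj (funT F z)).re := by
  have hsq := cpow_ofNat_inv_pow (z ^ 2 - (F : ℂ) ^ 2) 2
  rw [← one_div] at hsq
  unfold funT
  split_ifs with hC
  · exact re_mul_conj_pos_of_sq_eq hF hC (cpow_one_div_two_mem_Cplus _) hsq hz
  · have hC' : -z ∈ Cplus := by
      simp only [Cplus, Set.mem_ofPred_eq, not_or, not_and, not_lt, not_le] at hC ⊢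
      rw [neg_re, neg_im]
      rcases hC.1.lt_or_eq with h | h
      exacts [Or.inl (neg_pos.2 h), Or.inr ⟨neg_eq_zero.2 h, (neg_pos.2 (hC.2 h)).le⟩]
    have hz' : -z ∉ segC F := fun ⟨h1, h2, h3⟩ =>
      hz ⟨by simpa using h1, by simp at h3; linarith, by simp at h2; linarith⟩
    simpa using
      re_mul_conj_pos_of_sq_eq hF hC' (cpow_one_div_two_mem_Cplus _) (by rw [hsq]; ring) hz'

lemma funU_eq (F : ℝ) (z : ℂ) : funU F z = (z - funT F z) / F := by
  unfold funU funT
  split_ifs <;> ring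

lemma funT_add_mul_funT_sub (F : ℝ) (z : ℂ) : (z - funT F z) * (z + funT F z) = F ^ 2 := by
  linear_combination -funT_sq F z

lemma funU_ne_zero {F : ℝ} (hF : F ≠ 0) (z : ℂ) : funU F z ≠ 0 := by
  have hF' : (F : ℂ) ≠ 0 := by exact_mod_cast hF
  have hprod := funT_add_mul_funT_sub F z
  rw [funU_eq]
  exact div_ne_zero (left_ne_zero_of_mul (hprod ▸ pow_ne_zero 2 hF')) hF'

lemma inv_funU {F : ℝ} (hF : F ≠ 0) (z : ℂ) : (funU F z)⁻¹ = (z + funT F z) / F := by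
  have hF' : (F : ℂ) ≠ 0 := by exact_mod_cast hF
  refine inv_eq_of_mul_eq_one_right ?_
  rw [funU_eq, div_mul_div_comm, funT_add_mul_funT_sub, ← sq, div_self (pow_ne_zero 2 hF')]

lemma joukowski_funU {F : ℝ} (hF : F ≠ 0) (z : ℂ) :
    F / 2 * (funU F z + (funU F z)⁻¹) = z := by
  have hF' : (F : ℂ) ≠ 0 := by exact_mod_cast hF
  rw [inv_funU hF, funU_eq]
  field_simp
  ring

lemma normSq_funU_lt_one {F : ℝ} (hF : 0 < F) {z : ℂ} (hz : z ∉ segC F) :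
    normSq (funU F z) < 1 := by
  have hprod := congrArg normSq (funT_add_mul_funT_sub F z)
  rw [map_mul, ← ofReal_pow, normSq_ofReal] at hprod
  have hlt : normSq (z - funT F z) < normSq (z + funT F z) := by
    rw [normSq_add, normSq_sub]
    linarith [re_mul_conj_funT_pos hF.le hz]
  rw [funU_eq, map_div₀, normSq_ofReal, div_lt_one (by positivity)]
  nlinarith [normSq_nonneg (z - funT F z), mul_pos hF hF]

section Ellipse

variable {t : ℝ}

lemma focF_sq (ht0 : 0 ≤ t) (ht1 : t < 1) : focF t ^ 2 = 4 * t / (1 - t ^ 2) := by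
  rw [focF, mul_pow, Real.sq_sqrt (div_nonneg ht0 (by nlinarith))]
  ring

lemma semiA_sq (ht0 : -1 ≤ t) (ht1 : t < 1) : semiA t ^ 2 = (1 + t) / (1 - t) :=
  Real.sq_sqrt (div_nonneg (by linarith) (by linarith))

lemma semiB_sq (ht0 : -1 < t) (ht1 : t ≤ 1) : semiB t ^ 2 = (1 - t) / (1 + t) :=
  Real.sq_sqrt (div_nonneg (by linarith) (by linarith))

lemma semiA_sq_sub_semiB_sq (ht0 : 0 ≤ t) (ht1 : t < 1) :
    semiA t ^ 2 - semiB t ^ 2 = focF t ^ 2 := by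
  have : 1 - t ^ 2 ≠ 0 := by nlinarith
  have : 1 - t ≠ 0 := by linarith
  have : 1 + t ≠ 0 := by linarith
  rw [semiA_sq (by linarith) ht1, semiB_sq (by linarith) ht1.le, focF_sq ht0 ht1]
  field_simp
  ring

lemma notMem_segC_of_mem_ellipseBd (ht0 : 0 ≤ t) (ht1 : t < 1) {z : ℂ}
    (hz : z ∈ ellipseBd t) : z ∉ segC (focF t) := by
  rintro ⟨him, hle, hge⟩
  have hA : 0 < semiA t := Real.sqrt_pos.2 (div_pos (by linarith) (by linarith))
  have hB : 0 < semiB t := Real.sqrt_pos.2 (div_pos (by linarith) (by linarith))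
  have hre : z.re ^ 2 = semiA t ^ 2 := by
    simpa [ellipseBd, him, div_eq_one_iff_eq, hA.ne'] using hz
  have hF : 0 ≤ focF t := by unfold focF; positivity
  nlinarith [semiA_sq_sub_semiB_sq ht0 ht1]

end Ellipse

section RadialProfile

variable {t r : ℝ}

/-- `f` at the point `F/2 (√r + 1/√r)` of the major axis, where `U_F = √r`. -/
noncomputable def radialProfile (t r : ℝ) : ℝ :=
  r - Real.log r - t / (1 + t) * (r + 2 + r⁻¹) + Real.log t + 1

lemma radialProfile_self (ht : 0 < t) : radialProfile t t = 0 := by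
  have : 1 + t ≠ 0 := by linarith
  unfold radialProfile
  field_simp
  ring

lemma hasDerivAt_radialProfile (ht : 1 + t ≠ 0) (hr : r ≠ 0) :
    HasDerivAt (radialProfile t) ((r - 1) * (r - t) / ((1 + t) * r ^ 2)) r := by
  have h := ((((hasDerivAt_id' r).sub (Real.hasDerivAt_log hr)).sub
    ((((hasDerivAt_id' r).add_const 2).add (hasDerivAt_inv hr)).const_mul (t / (1 + t)))).add_const
    (Real.log t)).add_const 1
  have hD :
      1 - r⁻¹ - t / (1 + t) * (1 + -(r ^ 2)⁻¹) = (r - 1) * (r - t) / ((1 + t) * r ^ 2) := by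
    field_simp
    ring
  exact hD ▸ h

lemma radialProfile_neg (ht0 : 0 < t) (ht1 : t < 1) (hr0 : 0 < r) (hr1 : r < 1) (hrt : r ≠ t) :
    radialProfile t r < 0 := by
  have hderiv : ∀ x, 0 < x → HasDerivAt (radialProfile t)
      ((x - 1) * (x - t) / ((1 + t) * x ^ 2)) x :=
    fun x hx => hasDerivAt_radialProfile (by linarith) hx.ne'
  have hcont : ∀ a, 0 < a → ∀ b, ContinuousOn (radialProfile t) (Set.Icc a b) :=
    fun a ha b x hx => (hderiv x (ha.trans_le hx.1)).continuousAt.continuousWithinAt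
  rw [← radialProfile_self ht0]
  rcases hrt.lt_or_gt with hlt | hgt
  · refine strictMonoOn_of_deriv_pos (convex_Icc r t) (hcont r hr0 t) (fun x hx => ?_)
      ⟨le_rfl, hlt.le⟩ ⟨hlt.le, le_rfl⟩ hlt
    rw [interior_Icc] at hx
    rw [(hderiv x (hr0.trans hx.1)).deriv]
    have := hr0.trans hx.1
    exact div_pos (mul_pos_of_neg_of_neg (by linarith [hx.2]) (by linarith [hx.2])) (by positivity)
  · refine strictAntiOn_of_deriv_neg (convex_Icc t r) (hcont t ht0 r) (fun x hx => ?_)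
      ⟨le_rfl, hgt.le⟩ ⟨hgt.le, le_rfl⟩ hgt
    rw [interior_Icc] at hx
    rw [(hderiv x (ht0.trans hx.1)).deriv]
    apply div_neg_of_neg_of_pos
    · exact mul_neg_of_neg_of_pos (by linarith [hx.2]) (by linarith [hx.1])
    · have := ht0.trans hx.1
      positivity

end RadialProfile

section Joukowski

variable {t : ℝ} {u z : ℂ}

lemma joukowski_re (F : ℝ) (u : ℂ) :
    ((F : ℂ) / 2 * (u + u⁻¹)).re = F / 2 * (u.re + u.re / normSq u) := by
  simp [inv_re]

lemma joukowski_im (F : ℝ) (u : ℂ) :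
    ((F : ℂ) / 2 * (u + u⁻¹)).im = F / 2 * (u.im - u.im / normSq u) := by
  simp [inv_im, sub_eq_add_neg, neg_div]

lemma joukowski_mem_ellipseBd_iff (ht0 : 0 < t) (ht1 : t < 1) (hu0 : u ≠ 0)
    (hu1 : normSq u < 1) (hz : (focF t : ℂ) / 2 * (u + u⁻¹) = z) :
    z ∈ ellipseBd t ↔ normSq u = t := by
  have hr0 : 0 < normSq u := normSq_pos.2 hu0
  have h1t : 1 - t ≠ 0 := by linarith
  have h1t' : 1 + t ≠ 0 := by linarith
  have h1t2 : 1 - t ^ 2 ≠ 0 := by nlinarith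
  have key : z.re ^ 2 / semiA t ^ 2 + z.im ^ 2 / semiB t ^ 2 - 1 =
      -((normSq u - t) * (1 - t * normSq u) *
        (u.re ^ 2 * (1 - t) ^ 2 + u.im ^ 2 * (1 + t) ^ 2)) / ((1 - t ^ 2) ^ 2 * normSq u ^ 2) := by
    rw [← hz, joukowski_re, joukowski_im, mul_pow, mul_pow, div_pow, focF_sq ht0.le ht1,
      semiA_sq (by linarith) ht1, semiB_sq (by linarith) ht1.le]
    have hr : u.re ^ 2 + u.im ^ 2 ≠ 0 := by
      rw [normSq_apply, ← sq, ← sq] at hr0; exact hr0.ne'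
    rw [normSq_apply, ← sq, ← sq]
    field_simp
    ring
  have hfac : 0 < (1 - t * normSq u) * (u.re ^ 2 * (1 - t) ^ 2 + u.im ^ 2 * (1 + t) ^ 2) := by
    have hr : 0 < u.re ^ 2 + u.im ^ 2 := by rwa [normSq_apply, ← sq, ← sq] at hr0
    refine mul_pos (by nlinarith) ?_
    nlinarith [mul_pos (pow_pos (sub_pos.2 ht1) 2) hr, sq_nonneg u.im]
  rw [ellipseBd, Set.mem_ofPred_eq, ← sub_eq_zero, key, neg_div, neg_eq_zero,
    div_eq_zero_iff, mul_assoc, mul_eq_zero, sub_eq_zero]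
  simp [hfac.ne', h1t2, hr0.ne']

lemma joukowski_exponent (ht0 : 0 < t) (ht1 : t < 1) (hu0 : u ≠ 0)
    (hz : (focF t : ℂ) / 2 * (u + u⁻¹) = z) :
    t * (z ^ 2).re - ‖z‖ ^ 2 + (u ^ 2).re - 2 * Real.log ‖u‖ + Real.log t + 1 =
      radialProfile t (normSq u) -
        2 * u.im ^ 2 * (normSq u - t) ^ 2 / ((1 - t ^ 2) * normSq u ^ 2) := by
  have hr0 : 0 < normSq u := normSq_pos.2 hu0
  have h1t : 1 - t ≠ 0 := by linarith
  have h1t' : 1 + t ≠ 0 := by linarith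
  have h1t2 : 1 - t ^ 2 ≠ 0 := by nlinarith
  have hlog : 2 * Real.log ‖u‖ = Real.log (normSq u) := by
    rw [normSq_eq_norm_sq, Real.log_pow, Nat.cast_ofNat]
  have hsq_re (w : ℂ) : (w ^ 2).re = w.re ^ 2 - w.im ^ 2 := by rw [sq, mul_re]; ring
  have hsq_norm : ‖z‖ ^ 2 = z.re ^ 2 + z.im ^ 2 := by rw [Complex.sq_norm, normSq_apply]; ring
  have hr : u.re ^ 2 + u.im ^ 2 ≠ 0 := by rw [normSq_apply, ← sq, ← sq] at hr0; exact hr0.ne'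
  rw [hlog, hsq_re, hsq_re, hsq_norm, ← hz, joukowski_re, joukowski_im, mul_pow, mul_pow, div_pow,
    focF_sq ht0.le ht1, radialProfile, normSq_apply, ← sq, ← sq]
  field_simp
  ring

end Joukowski

/-- `f` vanishes on the ellipse `∂E_t` and is strictly negative off
`∂E_t ∪ [−F,F]`. -/
theorem stmt10 (t : ℝ) (ht0 : 0 < t) (ht1 : t < 1) :
    (∀ z ∈ ellipseBd t, funf t z = 0) ∧
    (∀ z : ℂ, z ∉ ellipseBd t → z ∉ segC (focF t) → funf t z < 0) := by
  have hF : 0 < focF t := by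
    unfold focF
    have : 0 < t / (1 - t ^ 2) := div_pos ht0 (by nlinarith)
    positivity
  have hu0 (z : ℂ) := funU_ne_zero hF.ne' z
  have hf (z : ℂ) := joukowski_exponent ht0 ht1 (hu0 z) (joukowski_funU hF.ne' z)
  have hmem {z : ℂ} (hz : z ∉ segC (focF t)) :=
    joukowski_mem_ellipseBd_iff ht0 ht1 (hu0 z) (normSq_funU_lt_one hF hz) (joukowski_funU hF.ne' z)
  refine ⟨fun z hz => ?_, fun z hz hseg => ?_⟩
  · rw [funf, hf, (hmem (notMem_segC_of_mem_ellipseBd ht0.le ht1 hz)).1 hz, radialProfile_self ht0]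
    simp
  · have hg := radialProfile_neg ht0 ht1 (normSq_pos.2 (hu0 z)) (normSq_funU_lt_one hF hseg)
      fun h => hz ((hmem hseg).2 h)
    have hrem : 0 ≤ 2 * (funU (focF t) z).im ^ 2 * (normSq (funU (focF t) z) - t) ^ 2 /
        ((1 - t ^ 2) * normSq (funU (focF t) z) ^ 2) :=
      div_nonneg (by positivity) (mul_nonneg (by nlinarith) (by positivity))
    rw [funf, hf]
    linarith
end

section
/- Let t ∈ ℝ with 0 < t < 1, F = 2√(t/(1−t²)), and define g₊(z) = −((1−t)/(2√t))·Re(U_F(z))·|W_F(z)|² and g₋(z) = −((1+t)/(2√t))·Im(U_F(z))·|W_F(z)|² on ℂ ∖ [−F,F]. Then for every φ ∈ (−π, π], at the point z₀ = a_t·cos φ + i·b_t·sin φ of the ellipse ∂E_t one has g₊(z₀) = −2(1−t)·cos φ/√(1+t²−2t·cos 2φ) and g₋(z₀) = 2(1+t)·sin φ/√(1+t²−2t·cos 2φ). -/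
open scoped Classical

/-- `g₊(z) = −((1−t)/(2√t))·Re(U_F(z))·|W_F(z)|²` with `F = 2√(t/(1−t²))`. -/
noncomputable def gPlus (t : ℝ) (z : ℂ) : ℝ :=
  -((1 - t) / (2 * Real.sqrt t)) * (funU (focF t) z).re * ‖funW (focF t) z‖ ^ 2

/-- `g₋(z) = −((1+t)/(2√t))·Im(U_F(z))·|W_F(z)|²` with `F = 2√(t/(1−t²))`. -/
noncomputable def gMinus (t : ℝ) (z : ℂ) : ℝ :=
  -((1 + t) / (2 * Real.sqrt t)) * (funU (focF t) z).im * ‖funW (focF t) z‖ ^ 2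


/-! The map `w ↦ (F/2)(w + w⁻¹)` sends the circle `|w| = √t` onto `∂E_t`, with
`z₀ ↔ w = √t e^{-iφ}`. On the punctured unit disc `U_F` inverts this map: `z² − F² = T²` with
`T = (F/2)(w⁻¹ − w)`, and `z`, `T` lie together in `ℂ⁺`, so `U_F(z) = (z − T)/F = w`. Further
`(z+F)/(z−F) = r²` with `r = (1+w)/(1−w)` in the right half-plane, so `W_F(z) = u + u⁻¹` with
`u² = r`, whence `|W_F(z)|² = |r+1|²/|r| = 4/|1 − w²|`, and `|1 − w²|² = 1 + t² − 2t cos 2φ`. -/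

open Complex ComplexConjugate

lemma sq_cpow_half_of_mem_Cplus {v : ℂ} (hv : v ∈ Cplus) : (v ^ 2) ^ ((1 : ℂ) / 2) = v := by
  rw [one_div]
  refine pow_cpow_ofNat_inv ?_ ?_
  · exact neg_pi_div_two_lt_arg_iff.2 (hv.imp id fun h => h.2)
  · exact arg_le_pi_div_two_iff.2 (Or.inl (hv.elim le_of_lt fun h => h.1.ge))

lemma neg_mem_Cplus_of_notMem {v : ℂ} (hv : v ∉ Cplus) : -v ∈ Cplus := by
  simp only [Cplus, Set.mem_ofPred_eq, not_or, not_and, not_le, not_lt, neg_re, neg_im] at hv ⊢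
  rcases hv.1.lt_or_eq with h | h
  · exact Or.inl (by linarith)
  · exact Or.inr ⟨by rw [h, neg_zero], by linarith [hv.2 h]⟩

lemma funU_eq_of_sq_eq {F : ℝ} {z T : ℂ} (hT : T ^ 2 = z ^ 2 - F ^ 2)
    (hzT : z ∈ Cplus ↔ T ∈ Cplus) : funU F z = (z - T) / F := by
  unfold funU
  split_ifs with hz
  · rw [← hT, sq_cpow_half_of_mem_Cplus (hzT.1 hz)]
  · rw [← hT, ← neg_sq T, sq_cpow_half_of_mem_Cplus (neg_mem_Cplus_of_notMem (hzT.not.1 hz))]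
    ring

lemma mem_Cplus_iff_of_re_im {z v : ℂ} {α β : ℝ} (hα : 0 < α) (hβ : 0 < β)
    (hre : z.re = α * v.re) (him : z.im = β * v.im) : z ∈ Cplus ↔ v ∈ Cplus := by
  simp only [Cplus, Set.mem_ofPred_eq, hre, him, mul_pos_iff_of_pos_left hα, mul_eq_zero,
    hα.ne', false_or, mul_nonneg_iff_of_pos_left hβ]

noncomputable def joukowski (F : ℝ) (w : ℂ) : ℂ := F / 2 * (w + w⁻¹)

lemma funU_joukowski {F : ℝ} (hF : 0 < F) {w : ℂ} (hw0 : w ≠ 0) (hw1 : ‖w‖ < 1) :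
    funU F (joukowski F w) = w := by
  have hFC : (F : ℂ) ≠ 0 := ofReal_ne_zero.2 hF.ne'
  have hn : 0 < normSq w := normSq_pos.2 hw0
  have hn1 : 1 < (normSq w)⁻¹ := by
    rw [normSq_eq_norm_sq]
    exact one_lt_inv_iff₀.2 ⟨by positivity, by nlinarith [norm_nonneg w]⟩
  have hT : (F / 2 * (w⁻¹ - w)) ^ 2 = joukowski F w ^ 2 - F ^ 2 := by
    unfold joukowski; field_simp; ring
  rw [funU_eq_of_sq_eq hT]
  · unfold joukowski; field_simp; ring
  -- `z` and `T` have the signs of `re w̄` and `im w̄` coordinatewise.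
  · trans conj w ∈ Cplus
    · refine mem_Cplus_iff_of_re_im (α := F / 2 * (1 + (normSq w)⁻¹))
        (β := F / 2 * ((normSq w)⁻¹ - 1)) (by positivity) (by nlinarith) ?_ ?_ <;>
      · simp only [joukowski, mul_re, mul_im, add_re, add_im, inv_re, inv_im, conj_re, conj_im,
          div_ofNat_re, div_ofNat_im, ofReal_re, ofReal_im]
        ring
    · refine (mem_Cplus_iff_of_re_im (α := F / 2 * ((normSq w)⁻¹ - 1))
        (β := F / 2 * (1 + (normSq w)⁻¹)) (by nlinarith) (by positivity) ?_ ?_).symm <;>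
      · simp only [mul_re, mul_im, sub_re, sub_im, inv_re, inv_im, conj_re, conj_im,
          div_ofNat_re, div_ofNat_im, ofReal_re, ofReal_im]
        ring

lemma joukowski_add_div_sub {F : ℝ} (hF : F ≠ 0) {w : ℂ} (hw : w ≠ 0) :
    (joukowski F w + F) / (joukowski F w - F) = ((1 + w) / (1 - w)) ^ 2 := by
  have hFw : (F : ℂ) / (2 * w) ≠ 0 := by simp [hF, hw]
  have hadd : joukowski F w + F = F / (2 * w) * (1 + w) ^ 2 := by
    unfold joukowski; field_simp; ring
  have hsub : joukowski F w - F = F / (2 * w) * (1 - w) ^ 2 := by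
    unfold joukowski; field_simp; ring
  rw [hadd, hsub, mul_div_mul_left _ _ hFw, div_pow]

lemma re_one_add_div_one_sub_pos {w : ℂ} (hw : ‖w‖ < 1) : 0 < ((1 + w) / (1 - w)).re := by
  have h1 : 1 - w ≠ 0 := sub_ne_zero.2 fun h => by simp [← h] at hw
  have hnum : 0 < 1 - normSq w := by
    rw [normSq_eq_norm_sq]; nlinarith [norm_nonneg w]
  have : ((1 + w) / (1 - w)).re = (1 - normSq w) / normSq (1 - w) := by
    rw [div_re, normSq_apply w]
    simp only [add_re, add_im, sub_re, sub_im, one_re, one_im]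
    ring
  rw [this]; exact div_pos hnum (normSq_pos.2 h1)

lemma norm_cpow_quarter_add_inv_sq {r : ℂ} (hr : 0 < r.re) :
    ‖(r ^ 2) ^ ((1 : ℂ) / 4) + (r ^ 2)⁻¹ ^ ((1 : ℂ) / 4)‖ ^ 2 = ‖r + 1‖ ^ 2 / ‖r‖ := by
  have hr0 : r ≠ 0 := fun h => by simp [h] at hr
  have hq0 : r ^ 2 ≠ 0 := pow_ne_zero 2 hr0
  have harg : (r ^ 2).arg ≠ Real.pi := by
    rw [Ne, arg_eq_pi_iff, sq, mul_re, mul_im]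
    rintro ⟨hre, him⟩
    have : r.im = 0 := by nlinarith
    rw [this] at hre; nlinarith
  set u := (r ^ 2) ^ ((1 : ℂ) / 4) with hu
  have hu2 : u ^ 2 = r := by
    rw [hu, sq, ← cpow_add _ _ hq0, show (1 : ℂ) / 4 + 1 / 4 = 2⁻¹ by norm_num]
    exact sq_cpow_two_inv hr
  have hu0 : u ≠ 0 := by rintro h; rw [h] at hu2; exact hr0 (by simp [← hu2])
  rw [inv_cpow _ _ harg, ← hu, show u + u⁻¹ = (u ^ 2 + 1) / u by field_simp, hu2,
    norm_div, div_pow, ← norm_pow u, hu2]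

lemma norm_funW_joukowski_sq {F : ℝ} (hF : F ≠ 0) {w : ℂ} (hw0 : w ≠ 0) (hw1 : ‖w‖ < 1) :
    ‖funW F (joukowski F w)‖ ^ 2 = 4 / ‖1 - w ^ 2‖ := by
  have h1 : 1 - w ≠ 0 := sub_ne_zero.2 fun h => by simp [← h] at hw1
  rw [funW, ← inv_div (joukowski F w + F), joukowski_add_div_sub hF hw0,
    norm_cpow_quarter_add_inv_sq (re_one_add_div_one_sub_pos hw1),
    show (1 + w) / (1 - w) + 1 = 2 / (1 - w) by field_simp; ring,
    show 1 - w ^ 2 = (1 - w) * (1 + w) by ring]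
  simp only [norm_div, norm_mul, Complex.norm_two, div_pow]
  have : ‖1 - w‖ ≠ 0 := norm_ne_zero_iff.2 h1
  field_simp
  norm_num

lemma norm_one_sub_ofReal_mul_exp (ρ θ : ℝ) :
    ‖1 - ρ * exp (θ * I)‖ = √(1 + ρ ^ 2 - 2 * ρ * Real.cos θ) := by
  rw [norm_def, normSq_apply]
  congr 1
  simp only [sub_re, sub_im, one_re, one_im, re_ofReal_mul, im_ofReal_mul,
    exp_ofReal_mul_I_re, exp_ofReal_mul_I_im]
  linear_combination ρ ^ 2 * Real.sin_sq_add_cos_sq θ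

lemma focF_pos {t : ℝ} (ht0 : 0 < t) (ht1 : t < 1) : 0 < focF t := by
  have : 0 < 1 - t ^ 2 := by nlinarith
  unfold focF; positivity

lemma semiA_eq_focF_mul {t : ℝ} (ht0 : 0 < t) (ht1 : t < 1) :
    semiA t = focF t / 2 * (√t + (√t)⁻¹) := by
  have hs : 0 < √t := Real.sqrt_pos.2 ht0
  have h1 : 0 < 1 - t := by linarith
  have h2 : 0 < 1 - t ^ 2 := by nlinarith
  rw [semiA, Real.sqrt_eq_iff_eq_sq (by positivity) (by have := focF_pos ht0 ht1; positivity), focF, mul_pow,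
    div_pow, mul_pow, Real.sq_sqrt (by positivity)]
  field_simp
  rw [Real.sq_sqrt ht0.le]
  ring

lemma semiB_eq_focF_mul {t : ℝ} (ht0 : 0 < t) (ht1 : t < 1) :
    semiB t = focF t / 2 * ((√t)⁻¹ - √t) := by
  have hs : 0 < √t := Real.sqrt_pos.2 ht0
  have hs1 : √t ≤ 1 := Real.sqrt_le_one.2 ht1.le
  have h1 : 0 < 1 + t := by linarith
  have h2 : 0 < 1 - t ^ 2 := by nlinarith
  have h3 : 0 ≤ (√t)⁻¹ - √t := sub_nonneg.2 (hs1.trans ((one_le_inv₀ hs).2 hs1))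
  rw [semiB, Real.sqrt_eq_iff_eq_sq (by positivity) (by have := focF_pos ht0 ht1; positivity), focF, mul_pow,
    div_pow, mul_pow, Real.sq_sqrt (by positivity)]
  field_simp
  rw [Real.sq_sqrt ht0.le]
  ring

lemma ellipse_point_eq_joukowski {t : ℝ} (ht0 : 0 < t) (ht1 : t < 1) (φ : ℝ) :
    ((semiA t * Real.cos φ : ℝ) : ℂ) + I * ((semiB t * Real.sin φ : ℝ) : ℂ) =
      joukowski (focF t) (√t * exp ((-φ : ℝ) * I)) := by
  have hexp : (exp ((-φ : ℝ) * I))⁻¹ = exp (φ * I) := by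
    rw [← exp_neg]; push_cast; ring_nf
  rw [joukowski, mul_inv, hexp, ← ofReal_inv, semiA_eq_focF_mul ht0 ht1, semiB_eq_focF_mul ht0 ht1]
  apply Complex.ext <;>
  · simp only [add_re, add_im, mul_re, mul_im, ofReal_re, ofReal_im, I_re, I_im, div_ofNat_re,
      div_ofNat_im, exp_ofReal_mul_I_re, exp_ofReal_mul_I_im, Real.cos_neg, Real.sin_neg]
    ring

theorem stmt11_general (t : ℝ) (ht0 : 0 < t) (ht1 : t < 1) (φ : ℝ)
    (z₀ : ℂ)
    (hz₀ : z₀ = (semiA t * Real.cos φ : ℝ) + Complex.I * (semiB t * Real.sin φ : ℝ)) :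
    gPlus t z₀ = -(2 * (1 - t) * Real.cos φ) / Real.sqrt (1 + t ^ 2 - 2 * t * Real.cos (2 * φ)) ∧
    gMinus t z₀ = 2 * (1 + t) * Real.sin φ / Real.sqrt (1 + t ^ 2 - 2 * t * Real.cos (2 * φ)) := by
  set w : ℂ := √t * exp ((-φ : ℝ) * I) with hw
  have hs : 0 < √t := Real.sqrt_pos.2 ht0
  have hw0 : w ≠ 0 := mul_ne_zero (ofReal_ne_zero.2 hs.ne') (exp_ne_zero _)
  have hw1 : ‖w‖ < 1 := by
    rw [hw, norm_mul, norm_exp_ofReal_mul_I, mul_one, norm_real, Real.norm_of_nonneg hs.le,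
      Real.sqrt_lt' one_pos, one_pow]
    exact ht1
  have hF : 0 < focF t := focF_pos ht0 ht1
  have hz : z₀ = joukowski (focF t) w := hz₀.trans (ellipse_point_eq_joukowski ht0 ht1 φ)
  have hw2 : w ^ 2 = t * exp ((-(2 * φ) : ℝ) * I) := by
    rw [hw, mul_pow, ← ofReal_pow, Real.sq_sqrt ht0.le, ← exp_nat_mul]; push_cast; ring_nf
  have hN : 0 < √(1 + t ^ 2 - 2 * t * Real.cos (2 * φ)) :=
    Real.sqrt_pos.2 (by nlinarith [Real.cos_le_one (2 * φ)])
  have hW : ‖funW (focF t) z₀‖ ^ 2 = 4 / √(1 + t ^ 2 - 2 * t * Real.cos (2 * φ)) := by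
    rw [hz, norm_funW_joukowski_sq hF.ne' hw0 hw1, hw2, norm_one_sub_ofReal_mul_exp, Real.cos_neg]
  have hU : funU (focF t) z₀ = w := hz ▸ funU_joukowski hF hw0 hw1
  constructor
  · rw [gPlus, hU, hW, hw, re_ofReal_mul, exp_ofReal_mul_I_re, Real.cos_neg]
    field_simp; ring
  · rw [gMinus, hU, hW, hw, im_ofReal_mul, exp_ofReal_mul_I_im, Real.sin_neg]
    field_simp; ring

/-- the values of `g₊` and `g₋` on the ellipse `∂E_t`: at
`z₀ = a_t·cos φ + i·b_t·sin φ` one has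
`g₊(z₀) = −2(1−t)·cos φ/√(1+t²−2t·cos 2φ)` and
`g₋(z₀) = 2(1+t)·sin φ/√(1+t²−2t·cos 2φ)`. -/
theorem stmt11 (t : ℝ) (ht0 : 0 < t) (ht1 : t < 1) (φ : ℝ)
    (hφ : φ ∈ Set.Ioc (-Real.pi) Real.pi) (z₀ : ℂ)
    (hz₀ : z₀ = (semiA t * Real.cos φ : ℝ) + Complex.I * (semiB t * Real.sin φ : ℝ)) :
    gPlus t z₀ = -(2 * (1 - t) * Real.cos φ) / Real.sqrt (1 + t ^ 2 - 2 * t * Real.cos (2 * φ)) ∧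
    gMinus t z₀ = 2 * (1 + t) * Real.sin φ / Real.sqrt (1 + t ^ 2 - 2 * t * Real.cos (2 * φ)) :=
  stmt11_general t ht0 ht1 φ z₀ hz₀
end
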